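/- Degree counting for the Slavnov determinant: assuming the Bethe equations for v_1,…,v_N, the function u ↦ ∏_{i=1}^N∏_{j=1}^M [v_i-w_j] · det M_n / ( ∏_{i=1}^n∏_{j=1}^{Ñ}[u_i-w_j] ∏_{i<j≤n}[u_i-u_j] ∏_{i<j≤N}[v_i-v_j] ∏_{i<j≤Ñ}[w_j-w_i] ), viewed as a function of u_n, extends to a trigonometric polynomial of degree M−1 in u_n with zeros at u_n = w_i − γ for all 1 ≤ i ≤ Ñ = N−n. -/

import Mathlib

open Finset

/-- The function `f_i(x) = ([γ]/[v_i-x]) ∏_{k≠i} [v_k-x+γ]`. -/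
noncomputable def fXXZ (γ : ℂ) {N : ℕ} (v : Fin N → ℂ) (i : Fin N) (x : ℂ) : ℂ :=
  Complex.sinh γ / Complex.sinh (v i - x) *
    ∏ k ∈ Finset.univ.erase i, Complex.sinh (v k - x + γ)

/-- The function
`g_i(u) = ([γ]/[v_i-u]) (∏_{k≠i}[v_k-u+γ]∏_k[u-w_k+γ] − ∏_{k≠i}[v_k-u-γ]∏_k[u-w_k])`. -/
noncomputable def gXXZ (γ : ℂ) {N M : ℕ} (v : Fin N → ℂ) (w : Fin M → ℂ)
    (i : Fin N) (x : ℂ) : ℂ :=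
  Complex.sinh γ / Complex.sinh (v i - x) *
    ((∏ k ∈ Finset.univ.erase i, Complex.sinh (v k - x + γ)) *
      (∏ k, Complex.sinh (x - w k + γ)) -
     (∏ k ∈ Finset.univ.erase i, Complex.sinh (v k - x - γ)) *
      (∏ k, Complex.sinh (x - w k)))

/-- The determinant expression for the intermediate Bethe scalar product `S_n`. -/
noncomputable def SXXZ (γ : ℂ) {N M n : ℕ} (v : Fin N → ℂ) (w : Fin M → ℂ)
    (u : Fin n → ℂ) (hn : n ≤ N) (hNM : N ≤ M) : ℂ :=
  (∏ i, ∏ j, Complex.sinh (v i - w j)) *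
    Matrix.det (Matrix.of fun i j : Fin N =>
      if h : (j : ℕ) < N - n then
        fXXZ γ v i (w ⟨j, by have := j.isLt; omega⟩)
      else
        gXXZ γ v w i (u ⟨N - 1 - (j : ℕ), by have := j.isLt; omega⟩)) /
  ((∏ i : Fin n, ∏ j : Fin (N - n),
      Complex.sinh (u i - w ⟨j, by have := j.isLt; omega⟩)) *
   (∏ i : Fin n, ∏ j ∈ Ioi i, Complex.sinh (u i - u j)) *
   (∏ i : Fin N, ∏ j ∈ Ioi i, Complex.sinh (v i - v j)) *
   (∏ i : Fin (N - n), ∏ j ∈ Ioi i,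
      Complex.sinh (w ⟨j, by have := j.isLt; omega⟩ - w ⟨i, by have := i.isLt; omega⟩)))

/-!
Put `Z = e^{2u_n}`. Expanding `det M_n` along the column `g(u_n)` and multiplying by
`∏ₗ [v_l - u_n]` to remove the removable poles gives `e^{-(2N+M-2)u_n} P(Z)` for a polynomial
`P` of degree `≤ 2N+M-2`. Write `g = ∏ₖ[u-w_k+γ] f^{γ}(u) + ∏ₖ[u-w_k] f^{-γ}(u)`, where `f^{δ}`
is the column `f` built with `δ` in place of `γ`. For `j ≤ Ñ` the polynomial of the first
summand vanishes at `e^{2(w_j-γ)}` through its prefactor and at `e^{2w_j}` because `f^{γ}(w_j)`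
repeats a column; that of the second summand vanishes at `e^{2w_j}` through its prefactor and at
`e^{2(w_j-γ)}` because `f^{-γ}(w_j-γ)` is proportional to `f^{γ}(w_j)`. As each summand supplies
all `2Ñ` roots by itself, coincidences `w_j ≡ w_k - γ` need no separate treatment. `P` also
vanishes at `e^{2v_l}` (the Bethe equations) and at `e^{2u_i}`, `i < n` (two equal columns).
Dividing `P` by the `2N-1` factors at `e^{2w_j}, e^{2v_l}, e^{2u_i}`, the zeros of the
denominator, leaves a polynomial of degree `≤ M-1` that still vanishes at every `e^{2(w_j-γ)}`.
If some `u_i ≡ w_j - γ (mod πi)`, the columns `g(u_i)` and `f(w_j)` are proportional and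
everything vanishes.
-/

open Complex Polynomial

/-! ### Trigonometric polynomials -/

/-- `P` represents `f` as a trigonometric polynomial of degree `d`: `e^{dx} f(x) = P(e^{2x})`. -/
def IsTrigRep (d : ℕ) (P : ℂ[X]) (f : ℂ → ℂ) : Prop :=
  P.natDegree ≤ d ∧ ∀ x, P.eval (exp (2 * x)) = exp x ^ d * f x

namespace IsTrigRep

variable {d e : ℕ} {P Q : ℂ[X]} {f g : ℂ → ℂ}

lemma congr (h : IsTrigRep d P f) (hfg : ∀ x, f x = g x) : IsTrigRep d P g :=
  ⟨h.1, fun x => hfg x ▸ h.2 x⟩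

lemma mul (hP : IsTrigRep d P f) (hQ : IsTrigRep e Q g) :
    IsTrigRep (d + e) (P * Q) (fun x => f x * g x) :=
  ⟨natDegree_mul_le.trans (add_le_add hP.1 hQ.1), fun x => by
    rw [eval_mul, hP.2, hQ.2, pow_add]; ring⟩

lemma add (hP : IsTrigRep d P f) (hQ : IsTrigRep d Q g) :
    IsTrigRep d (P + Q) (fun x => f x + g x) :=
  ⟨(natDegree_add_le _ _).trans (max_le hP.1 hQ.1), fun x => by
    rw [eval_add, hP.2, hQ.2]; ring⟩

lemma const_mul (c : ℂ) (hP : IsTrigRep d P f) : IsTrigRep d (C c * P) (fun x => c * f x) :=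
  ⟨(natDegree_C_mul_le _ _).trans hP.1, fun x => by rw [eval_mul, eval_C, hP.2]; ring⟩

lemma sum {ι : Type*} {s : Finset ι} {P : ι → ℂ[X]} {f : ι → ℂ → ℂ}
    (h : ∀ i ∈ s, IsTrigRep d (P i) (f i)) :
    IsTrigRep d (∑ i ∈ s, P i) (fun x => ∑ i ∈ s, f i x) :=
  ⟨natDegree_sum_le_of_forall_le _ _ fun i hi => (h i hi).1, fun x => by
    rw [eval_finsetSum, Finset.mul_sum]
    exact Finset.sum_congr rfl fun i hi => (h i hi).2 x⟩

lemma prod {ι : Type*} {s : Finset ι} {d : ι → ℕ} {P : ι → ℂ[X]} {f : ι → ℂ → ℂ}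
    (h : ∀ i ∈ s, IsTrigRep (d i) (P i) (f i)) :
    IsTrigRep (∑ i ∈ s, d i) (∏ i ∈ s, P i) (fun x => ∏ i ∈ s, f i x) :=
  ⟨(natDegree_prod_le _ _).trans (Finset.sum_le_sum fun i hi => (h i hi).1), fun x => by
    rw [eval_prod, ← Finset.prod_pow_eq_pow_sum, ← Finset.prod_mul_distrib]
    exact Finset.prod_congr rfl fun i hi => (h i hi).2 x⟩

lemma isRoot (h : IsTrigRep d P f) {a : ℂ} (ha : f a = 0) : P.IsRoot (exp (2 * a)) := by
  rw [IsRoot.def, h.2, ha, mul_zero]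

lemma eval_ne_zero (h : IsTrigRep d P f) {a : ℂ} (ha : f a ≠ 0) :
    P.eval (exp (2 * a)) ≠ 0 := by
  rw [h.2]; exact mul_ne_zero (pow_ne_zero _ (exp_ne_zero a)) ha

lemma of_eq_mul {k : ℕ} {D : ℂ[X]} (hP : IsTrigRep (e + k) P f) (hD : IsTrigRep e D g)
    (hDm : D.Monic) (hDe : D.natDegree = e) (hPDQ : P = D * Q) :
    Q.natDegree ≤ k ∧ ∀ x, Q.eval (exp (2 * x)) * g x = exp x ^ k * f x := by
  refine ⟨?_, fun x => ?_⟩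
  · rcases eq_or_ne Q 0 with rfl | hQ
    · simp
    · have := hP.1
      rw [hPDQ, hDm.natDegree_mul' hQ, hDe] at this
      omega
  · have h := hP.2 x
    rw [hPDQ, eval_mul, hD.2, pow_add] at h
    exact mul_left_cancel₀ (pow_ne_zero e (exp_ne_zero x)) (by linear_combination h)

end IsTrigRep

lemma exp_two_mul_sub_exp_two_mul (x a : ℂ) :
    exp (2 * x) - exp (2 * a) = 2 * exp a * (exp x * sinh (x - a)) := by
  have h1 : exp a * (exp x * exp (x - a)) = exp (2 * x) := by
    rw [← exp_add, ← exp_add]; ring_nf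
  have h2 : exp a * (exp x * exp (-(x - a))) = exp (2 * a) := by
    rw [← exp_add, ← exp_add]; ring_nf
  rw [sinh]
  linear_combination -h1 + h2

lemma sinh_sub_eq_zero_of_exp_eq {a b : ℂ} (h : exp (2 * a) = exp (2 * b)) :
    sinh (a - b) = 0 := by
  have := exp_two_mul_sub_exp_two_mul a b
  rw [h, sub_self, eq_comm] at this
  simpa [exp_ne_zero] using this

lemma sinh_sub_eq_cosh_mul {t : ℂ} (ht : sinh t = 0) (c : ℂ) :
    sinh (c - t) = cosh t * sinh c := by
  rw [sinh_sub, ht]; ring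

lemma cosh_ne_zero_of_sinh_eq_zero {t : ℂ} (ht : sinh t = 0) : cosh t ≠ 0 := by
  intro h
  simpa [ht, h] using cosh_sq_sub_sinh_sq t

lemma isTrigRep_X_sub_C (a : ℂ) :
    IsTrigRep 1 (X - C (exp (2 * a))) (fun x => 2 * exp a * sinh (x - a)) :=
  ⟨(natDegree_X_sub_C _).le, fun x => by
    rw [eval_sub, eval_X, eval_C, exp_two_mul_sub_exp_two_mul]; ring⟩

lemma exists_isTrigRep_sinh_sub (a : ℂ) : ∃ P, IsTrigRep 1 P (fun x => sinh (x - a)) :=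
  ⟨_, ((isTrigRep_X_sub_C a).const_mul (exp (-a) / 2)).congr fun x => by
    rw [exp_neg]; field_simp [exp_ne_zero]⟩

lemma exists_isTrigRep_sinh_sub' (a : ℂ) : ∃ P, IsTrigRep 1 P (fun x => sinh (a - x)) :=
  ⟨_, ((isTrigRep_X_sub_C a).const_mul (-exp (-a) / 2)).congr fun x => by
    rw [exp_neg, ← neg_sub, sinh_neg]; field_simp [exp_ne_zero]⟩

lemma exists_isTrigRep_prod {ι : Type*} (s : Finset ι) {f : ι → ℂ → ℂ}
    (h : ∀ i, ∃ P, IsTrigRep 1 P (f i)) :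
    ∃ P, IsTrigRep s.card P (fun x => ∏ i ∈ s, f i x) := by
  choose P hP using h
  exact ⟨_, by simpa using IsTrigRep.prod (s := s) fun i _ => hP i⟩

noncomputable def expRootPoly {ι : Type*} [Fintype ι] (a : ι → ℂ) : ℂ[X] :=
  ∏ i, (X - C (exp (2 * a i)))

section expRootPoly

variable {ι : Type*} [Fintype ι] (a : ι → ℂ)

lemma expRootPoly_monic : (expRootPoly a).Monic :=
  monic_prod_of_monic _ _ fun _ _ => monic_X_sub_C _

lemma natDegree_expRootPoly : (expRootPoly a).natDegree = Fintype.card ι := by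
  simp [expRootPoly]

lemma isTrigRep_expRootPoly : IsTrigRep (Fintype.card ι) (expRootPoly a)
    (fun x => (∏ i, 2 * exp (a i)) * ∏ i, sinh (x - a i)) := by
  simpa [expRootPoly, Finset.prod_mul_distrib] using
    IsTrigRep.prod (s := Finset.univ) fun i _ => isTrigRep_X_sub_C (a i)

lemma isTrigRep_expRootPoly' : IsTrigRep (Fintype.card ι) (expRootPoly a)
    (fun x => (∏ i, -2 * exp (a i)) * ∏ i, sinh (a i - x)) :=
  (isTrigRep_expRootPoly a).congr fun x => by
    rw [← Finset.prod_mul_distrib, ← Finset.prod_mul_distrib]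
    exact Finset.prod_congr rfl fun i _ => by rw [← neg_sub, sinh_neg]; ring

lemma isRoot_expRootPoly (i : ι) : (expRootPoly a).IsRoot (exp (2 * a i)) :=
  (isTrigRep_expRootPoly a).isRoot <|
    mul_eq_zero_of_right _ (Finset.prod_eq_zero (Finset.mem_univ i) (by simp))

variable {a}

lemma eval_expRootPoly_ne_zero {x : ℂ} (hx : ∀ i, sinh (x - a i) ≠ 0) :
    (expRootPoly a).eval (exp (2 * x)) ≠ 0 :=
  (isTrigRep_expRootPoly a).eval_ne_zero <|
    mul_ne_zero (Finset.prod_ne_zero_iff.mpr fun i _ => by simp [exp_ne_zero])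
      (Finset.prod_ne_zero_iff.mpr fun i _ => hx i)

lemma expRootPoly_dvd {P : ℂ[X]} (ha : ∀ i j, i ≠ j → sinh (a i - a j) ≠ 0)
    (hP : ∀ i, P.IsRoot (exp (2 * a i))) : expRootPoly a ∣ P := by
  rcases eq_or_ne P 0 with rfl | hP0
  · exact dvd_zero _
  have hinj : ∀ i ∈ (Finset.univ : Finset ι).val, ∀ j ∈ (Finset.univ : Finset ι).val,
      exp (2 * a i) = exp (2 * a j) → i = j := fun i _ j _ h => by
    by_contra hij
    exact ha i j hij (sinh_sub_eq_zero_of_exp_eq h)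
  have hmap : expRootPoly a =
      ((Finset.univ.val.map fun i => exp (2 * a i)).map fun z => X - C z).prod := by
    rw [expRootPoly, Finset.prod_eq_multiset_prod, Multiset.map_map]; rfl
  rw [hmap, Multiset.prod_X_sub_C_dvd_iff_le_roots hP0,
    Multiset.le_iff_subset (Finset.univ.nodup.map_on hinj)]
  intro z hz
  obtain ⟨i, -, rfl⟩ := Multiset.mem_map.mp hz
  exact (mem_roots hP0).mpr (hP i)

lemma mul_expRootPoly_dvd {D P : ℂ[X]} (hDP : D ∣ P)
    (ha : ∀ i j, i ≠ j → sinh (a i - a j) ≠ 0) (hP : ∀ i, P.IsRoot (exp (2 * a i)))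
    (hD : ∀ i, D.eval (exp (2 * a i)) ≠ 0) : D * expRootPoly a ∣ P := by
  obtain ⟨R, rfl⟩ := hDP
  refine mul_dvd_mul_left D (expRootPoly_dvd ha fun i => ?_)
  have := hP i
  rw [IsRoot.def, eval_mul] at this
  exact (mul_eq_zero.mp this).resolve_left (hD i)

end expRootPoly

lemma eval_exp_eq_exp_pow_mul_sum {Q : ℂ[X]} {M : ℕ} (hQ : Q.natDegree < M) (x : ℂ) :
    Q.eval (exp (2 * x)) = exp x ^ (M - 1) *
      ∑ k : Fin M, Q.coeff (M - 1 - k) * exp (((M : ℂ) - 1 - 2 * ((k : ℕ) : ℂ)) * x) := by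
  have hterm : ∀ k ∈ Finset.range M, exp (2 * x) ^ (M - 1 - k) =
      exp x ^ (M - 1) * exp (((M : ℂ) - 1 - 2 * (k : ℂ)) * x) := fun k hk => by
    have hkM := Finset.mem_range.mp hk
    rw [← exp_nat_mul, ← exp_nat_mul, ← exp_add]
    push_cast [Nat.cast_sub (by omega : k ≤ M - 1), Nat.cast_sub (by omega : 1 ≤ M)]
    ring_nf
  rw [eval_eq_sum_range' hQ, ← Finset.sum_range_reflect, Fin.sum_univ_eq_sum_range (fun k =>
    Q.coeff (M - 1 - k) * exp (((M : ℂ) - 1 - 2 * (k : ℂ)) * x)) M, Finset.mul_sum]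
  refine Finset.sum_congr rfl fun k hk => ?_
  rw [hterm k hk]; ring

/-! ### Determinants -/

lemma Matrix.det_eq_zero_of_col_eq_mul {n R : Type*} [DecidableEq n] [Fintype n] [CommRing R]
    (A : Matrix n n R) {i j : n} (hij : i ≠ j) (c : R) (h : ∀ k, A k i = c * A k j) :
    A.det = 0 := by
  rw [← A.det_updateCol_add_smul_self hij (-c)]
  exact Matrix.det_eq_zero_of_column_eq_zero i fun k => by simp [h k]

lemma Matrix.det_updateCol_eq_sum_adjugate {n R : Type*} [DecidableEq n] [Fintype n]
    [CommRing R] (A : Matrix n n R) (c : n) (b : n → R) :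
    (A.updateCol c b).det = ∑ l, A.adjugate c l * b l := by
  rw [← Matrix.cramer_apply, Matrix.cramer_eq_adjugate_mulVec]; rfl

lemma isTrigRep_det_updateCol {n : Type*} [DecidableEq n] [Fintype n] (A : Matrix n n ℂ) (c : n)
    {d : ℕ} {P : n → ℂ[X]} {b : ℂ → n → ℂ} (h : ∀ l, IsTrigRep d (P l) (fun x => b x l)) :
    IsTrigRep d (∑ l, C (A.adjugate c l) * P l) (fun x => (A.updateCol c (b x)).det) :=
  (IsTrigRep.sum fun l _ => (h l).const_mul _).congr fun x =>
    (A.det_updateCol_eq_sum_adjugate c (b x)).symm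

lemma Fin.prod_Ioi_castSucc {R : Type*} [CommMonoid R] {n : ℕ} (f : Fin (n + 1) → R)
    (i : Fin n) : ∏ j ∈ Ioi i.castSucc, f j = (∏ j ∈ Ioi i, f j.castSucc) * f (Fin.last n) := by
  rw [← Finset.filter_lt_eq_Ioi, Finset.prod_filter, Fin.prod_univ_castSucc,
    ← Finset.filter_lt_eq_Ioi, Finset.prod_filter]
  simp [Fin.castSucc_lt_last]

/-! ### The matrix `M_n` -/

namespace Slavnov

variable {N M : ℕ}

/-- `fCleared γ v l x = (∏ₖ [v_k - x]) f_l(x)`, written without the removable pole at `x = v_l`. -/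
noncomputable def fCleared (γ : ℂ) (v : Fin N → ℂ) (l : Fin N) (x : ℂ) : ℂ :=
  sinh γ * ((∏ k ∈ univ.erase l, sinh (v k - x)) * ∏ k ∈ univ.erase l, sinh (v k - x + γ))

lemma gXXZ_eq (γ : ℂ) (v : Fin N → ℂ) (w : Fin M → ℂ) (l : Fin N) (x : ℂ) :
    gXXZ γ v w l x = (∏ k, sinh (x - w k + γ)) * fXXZ γ v l x +
      (∏ k, sinh (x - w k)) * fXXZ (-γ) v l x := by
  simp only [gXXZ, fXXZ, sinh_neg, ← sub_eq_add_neg]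
  ring

lemma prod_sinh_mul_fXXZ {γ x : ℂ} {v : Fin N → ℂ} {l : Fin N} (hx : sinh (v l - x) ≠ 0) :
    (∏ k, sinh (v k - x)) * fXXZ γ v l x = fCleared γ v l x := by
  rw [fXXZ, fCleared, ← Finset.mul_prod_erase _ _ (Finset.mem_univ l)]
  field_simp

lemma fCleared_v_eq_zero_of_ne {γ : ℂ} {v : Fin N → ℂ} {i l : Fin N} (hl : l ≠ i) :
    fCleared γ v l (v i) = 0 := by
  rw [fCleared, Finset.prod_eq_zero (Finset.mem_erase.mpr ⟨hl.symm, Finset.mem_univ i⟩)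
    (by rw [sub_self, sinh_zero])]
  ring

lemma exists_isTrigRep_fCleared (γ : ℂ) (v : Fin N → ℂ) (l : Fin N) :
    ∃ P, IsTrigRep ((N - 1) + (N - 1)) P (fCleared γ v l) := by
  obtain ⟨P₁, h₁⟩ := exists_isTrigRep_prod (univ.erase l) fun k => exists_isTrigRep_sinh_sub' (v k)
  obtain ⟨P₂, h₂⟩ := exists_isTrigRep_prod (univ.erase l) fun k =>
    (exists_isTrigRep_sinh_sub' (v k + γ)).imp fun _ hP => hP.congr fun x => by
      rw [add_sub_right_comm]
  rw [card_erase_of_mem (mem_univ l), card_univ, Fintype.card_fin] at h₁ h₂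
  exact ⟨_, (h₁.mul h₂).const_mul (sinh γ)⟩

lemma exists_fXXZ_neg_eq_mul {γ a x : ℂ} {v : Fin N → ℂ} (hx : sinh (x - a + γ) = 0)
    (ha : ∀ l, sinh (v l - a) ≠ 0) (haγ : ∀ l, sinh (v l - a + γ) ≠ 0) :
    ∃ c, ∀ l, fXXZ (-γ) v l x = c * fXXZ γ v l a := by
  -- with `t := x - a + γ`, every factor `sinh (c - t)` equals `cosh t * sinh c`
  set ε := cosh (x - a + γ)
  have hε : ε ≠ 0 := cosh_ne_zero_of_sinh_eq_zero hx
  have hnum : ∀ k, sinh (v k - x + -γ) = ε * sinh (v k - a) := fun k => by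
    rw [← sinh_sub_eq_cosh_mul hx]; ring_nf
  have hden : ∀ l, sinh (v l - x) = ε * sinh (v l - a + γ) := fun l => by
    rw [← sinh_sub_eq_cosh_mul hx]; ring_nf
  refine ⟨-ε ^ (N - 1) / ε * ((∏ k, sinh (v k - a)) / ∏ k, sinh (v k - a + γ)), fun l => ?_⟩
  rw [fXXZ, fXXZ, hden, Finset.prod_congr rfl fun k _ => hnum k, Finset.prod_mul_distrib,
    Finset.prod_const, card_erase_of_mem (mem_univ l), card_univ, Fintype.card_fin,
    ← Finset.mul_prod_erase _ (fun k => sinh (v k - a)) (mem_univ l),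
    ← Finset.mul_prod_erase _ (fun k => sinh (v k - a + γ)) (mem_univ l), sinh_neg]
  have hprod : ∏ k ∈ univ.erase l, sinh (v k - a + γ) ≠ 0 :=
    Finset.prod_ne_zero_iff.mpr fun k _ => haγ k
  field_simp [ha l, haγ l]

lemma exists_gXXZ_eq_mul {γ x : ℂ} {v : Fin N → ℂ} {w : Fin M → ℂ} {j : Fin M}
    (hx : sinh (x - w j + γ) = 0) (hvw : ∀ l, sinh (v l - w j) ≠ 0)
    (hvwγ : ∀ l, sinh (v l - w j + γ) ≠ 0) :
    ∃ c, ∀ l, gXXZ γ v w l x = c * fXXZ γ v l (w j) := by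
  obtain ⟨c, hc⟩ := exists_fXXZ_neg_eq_mul hx hvw hvwγ
  refine ⟨(∏ k, sinh (x - w k)) * c, fun l => ?_⟩
  rw [gXXZ_eq, Finset.prod_eq_zero (mem_univ j) hx, hc]
  ring

/-- Cleared of denominators, the Bethe equation for `v_i` says that the residue of `g_i` at
`v_i` vanishes. -/
lemma bethe_cleared {γ : ℂ} {v : Fin N → ℂ} {w : Fin M → ℂ} {i : Fin N}
    (hb : ∏ j, sinh (v i - w j + γ) / sinh (v i - w j) =
      ∏ j ∈ univ.erase i, sinh (v i - v j + γ) / sinh (v i - v j - γ))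
    (hvw : ∀ j, sinh (v i - w j) ≠ 0) (hvwγ : ∀ j, sinh (v i - w j + γ) ≠ 0) :
    (∏ k, sinh (v i - w k + γ)) * ∏ k ∈ univ.erase i, sinh (v k - v i + γ) =
      (∏ k, sinh (v i - w k)) * ∏ k ∈ univ.erase i, sinh (v k - v i - γ) := by
  have hden : ∀ k ∈ univ.erase i, sinh (v i - v k - γ) ≠ 0 := fun k hk h0 =>
    (Finset.prod_ne_zero_iff.mpr fun j _ => div_ne_zero (hvwγ j) (hvw j))
      (hb.trans (Finset.prod_eq_zero hk (by rw [h0, div_zero])))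
  rw [Finset.prod_div_distrib, Finset.prod_div_distrib,
    div_eq_div_iff (Finset.prod_ne_zero_iff.mpr fun k _ => hvw k)
      (Finset.prod_ne_zero_iff.mpr hden)] at hb
  have h₁ : ∏ k ∈ univ.erase i, sinh (v k - v i + γ) =
      (-1) ^ #(univ.erase i) * ∏ k ∈ univ.erase i, sinh (v i - v k - γ) := by
    rw [← Finset.prod_neg]
    exact Finset.prod_congr rfl fun k _ => by rw [← sinh_neg]; ring_nf
  have h₂ : ∏ k ∈ univ.erase i, sinh (v k - v i - γ) =
      (-1) ^ #(univ.erase i) * ∏ k ∈ univ.erase i, sinh (v i - v k + γ) := by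
    rw [← Finset.prod_neg]
    exact Finset.prod_congr rfl fun k _ => by rw [← sinh_neg]; ring_nf
  rw [h₁, h₂]
  linear_combination (-1 : ℂ) ^ #(univ.erase i) * hb

/-- The matrix `M_n` of `SXXZ`. -/
noncomputable def slavnovMatrix (γ : ℂ) {n : ℕ} (v : Fin N → ℂ) (w : Fin M → ℂ) (u : Fin n → ℂ)
    (hn : n ≤ N) (hNM : N ≤ M) : Matrix (Fin N) (Fin N) ℂ :=
  Matrix.of fun i j : Fin N =>
    if h : (j : ℕ) < N - n then
      fXXZ γ v i (w ⟨j, by have := j.isLt; omega⟩)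
    else
      gXXZ γ v w i (u ⟨N - 1 - (j : ℕ), by have := j.isLt; omega⟩)

/-- The parameters `w_1, …, w_Ñ` of the columns `f(w_j)` of `M_n`, where `Ñ = N - (m + 1)`. -/
def wHead (w : Fin M → ℂ) (m : ℕ) (hNM : N ≤ M) (j : Fin (N - (m + 1))) : ℂ :=
  w (Fin.castLE (by omega) j)

/-- The (0-based) column of `M_n` holding `g(u_n)`. -/
def colIdx {m : ℕ} (hm : m + 1 ≤ N) : Fin N := ⟨N - (m + 1), by omega⟩

variable (γ : ℂ) {m : ℕ} (v : Fin N → ℂ) (w : Fin M → ℂ) (u : Fin (m + 1) → ℂ)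
  (hm : m + 1 ≤ N) (hNM : N ≤ M)

/-- `det M_n` as a function of the column `g(u_n)`. -/
noncomputable def detCol (b : Fin N → ℂ) : ℂ :=
  ((slavnovMatrix γ v w u hm hNM).updateCol (colIdx hm) b).det

lemma slavnovMatrix_apply_castLE (j : Fin (N - (m + 1))) (l : Fin N) :
    slavnovMatrix γ v w u hm hNM l (Fin.castLE (by omega) j) = fXXZ γ v l (wHead w m hNM j) := by
  simp only [slavnovMatrix, Matrix.of_apply, Fin.val_castLE, dif_pos j.isLt]
  rfl

lemma slavnovMatrix_apply_u (i : Fin m) (l : Fin N) :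
    slavnovMatrix γ v w u hm hNM l ⟨N - 1 - i, by omega⟩ = gXXZ γ v w l (u i.castSucc) := by
  simp only [slavnovMatrix, Matrix.of_apply, dif_neg (show ¬N - 1 - (i : ℕ) < N - (m + 1) by omega)]
  congr 2
  ext
  simp only [Fin.val_castSucc]
  omega

lemma slavnovMatrix_update (x : ℂ) :
    slavnovMatrix γ v w (Function.update u (Fin.last m) x) hm hNM =
      (slavnovMatrix γ v w u hm hNM).updateCol (colIdx hm) fun l => gXXZ γ v w l x := by
  ext l j
  by_cases hj : j = colIdx hm
  · subst hj
    have hlast : (⟨N - 1 - (N - (m + 1)), by omega⟩ : Fin (m + 1)) = Fin.last m := by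
      ext; simp only [Fin.val_last]; omega
    simp [slavnovMatrix, colIdx, hlast]
  · have hj' : (j : ℕ) ≠ N - (m + 1) := fun h => hj (Fin.ext h)
    rw [Matrix.updateCol_ne hj]
    simp only [slavnovMatrix, Matrix.of_apply]
    split_ifs
    · rfl
    · rw [Function.update_of_ne]
      intro h
      have := congrArg Fin.val h
      simp only [Fin.val_last] at this
      omega

lemma detCol_eq_sum (b : Fin N → ℂ) :
    detCol γ v w u hm hNM b = ∑ l, (slavnovMatrix γ v w u hm hNM).adjugate (colIdx hm) l * b l :=
  Matrix.det_updateCol_eq_sum_adjugate _ _ _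

variable {γ v w u hm hNM}

lemma detCol_eq_zero_of_eq_mul {b : Fin N → ℂ} {j : Fin N} (hj : j ≠ colIdx hm) (c : ℂ)
    (hb : ∀ l, b l = c * slavnovMatrix γ v w u hm hNM l j) : detCol γ v w u hm hNM b = 0 :=
  Matrix.det_eq_zero_of_col_eq_mul _ hj.symm c fun l => by
    rw [Matrix.updateCol_self, Matrix.updateCol_ne hj, hb]

lemma detCol_fXXZ_wHead (j : Fin (N - (m + 1))) :
    detCol γ v w u hm hNM (fun l => fXXZ γ v l (wHead w m hNM j)) = 0 :=
  detCol_eq_zero_of_eq_mul (j := Fin.castLE (by omega) j)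
    (Fin.ne_of_val_ne (by simp [colIdx]; omega)) 1 fun l => by
    rw [one_mul, slavnovMatrix_apply_castLE]

lemma detCol_gXXZ_u (i : Fin m) :
    detCol γ v w u hm hNM (fun l => gXXZ γ v w l (u i.castSucc)) = 0 :=
  detCol_eq_zero_of_eq_mul (j := ⟨N - 1 - i, by omega⟩)
    (Fin.ne_of_val_ne (by simp [colIdx]; omega)) 1 fun l => by
    rw [one_mul, slavnovMatrix_apply_u]

lemma detCol_fXXZ_neg_wHead (j : Fin (N - (m + 1)))
    (hvw : ∀ l, sinh (v l - wHead w m hNM j) ≠ 0)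
    (hvwγ : ∀ l, sinh (v l - wHead w m hNM j + γ) ≠ 0) :
    detCol γ v w u hm hNM (fun l => fXXZ (-γ) v l (wHead w m hNM j - γ)) = 0 := by
  obtain ⟨c, hc⟩ := exists_fXXZ_neg_eq_mul (by rw [sub_sub_cancel_left, neg_add_cancel, sinh_zero])
    hvw hvwγ
  exact detCol_eq_zero_of_eq_mul (j := Fin.castLE (by omega) j)
    (Fin.ne_of_val_ne (by simp [colIdx]; omega)) c fun l => by
    rw [hc, slavnovMatrix_apply_castLE]

/-- The columns `g(u_i)` and `f(w_j)` of `M_n` are then proportional. -/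
lemma detCol_eq_zero_of_sinh_eq_zero {i : Fin m} {j : Fin (N - (m + 1))}
    (h : sinh (u i.castSucc - wHead w m hNM j + γ) = 0)
    (hvw : ∀ l, sinh (v l - wHead w m hNM j) ≠ 0)
    (hvwγ : ∀ l, sinh (v l - wHead w m hNM j + γ) ≠ 0) (b : Fin N → ℂ) :
    detCol γ v w u hm hNM b = 0 := by
  obtain ⟨c, hc⟩ := exists_gXXZ_eq_mul (w := w) (j := Fin.castLE (by omega) j) h hvw hvwγ
  refine Matrix.det_eq_zero_of_col_eq_mul _ (i := ⟨N - 1 - i, by omega⟩)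
    (j := Fin.castLE (by omega) j) (Fin.ne_of_val_ne (by simp; omega)) c fun l => ?_
  rw [Matrix.updateCol_ne (Fin.ne_of_val_ne (by simp [colIdx]; omega)),
    Matrix.updateCol_ne (Fin.ne_of_val_ne (by simp [colIdx]; omega)), slavnovMatrix_apply_u,
    slavnovMatrix_apply_castLE, hc]
  rfl

variable (γ v w u hm hNM)

/-- `(∏ₗ [v_l - x]) · det M_n` at `u_n = x`, written without the removable poles at `x = v_l`. -/
noncomputable def clearedDet (x : ℂ) : ℂ :=
  (∏ k, sinh (x - w k + γ)) * detCol γ v w u hm hNM (fun l => fCleared γ v l x) +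
    (∏ k, sinh (x - w k)) * detCol γ v w u hm hNM (fun l => fCleared (-γ) v l x)

variable {γ v w u hm hNM}

lemma detCol_fCleared {δ x : ℂ} (hx : ∀ l, sinh (v l - x) ≠ 0) :
    detCol γ v w u hm hNM (fun l => fCleared δ v l x) =
      (∏ l, sinh (v l - x)) * detCol γ v w u hm hNM (fun l => fXXZ δ v l x) := by
  simp only [detCol_eq_sum, Finset.mul_sum, ← prod_sinh_mul_fXXZ (hx _)]
  exact Finset.sum_congr rfl fun l _ => by ring

lemma clearedDet_eq {x : ℂ} (hx : ∀ l, sinh (v l - x) ≠ 0) :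
    clearedDet γ v w u hm hNM x =
      (∏ l, sinh (v l - x)) * detCol γ v w u hm hNM (fun l => gXXZ γ v w l x) := by
  simp only [clearedDet, detCol_eq_sum, Finset.mul_sum, ← Finset.sum_add_distrib, gXXZ_eq,
    ← prod_sinh_mul_fXXZ (hx _)]
  exact Finset.sum_congr rfl fun l _ => by ring

lemma clearedDet_v_eq_zero {i : Fin N}
    (hb : ∏ j, sinh (v i - w j + γ) / sinh (v i - w j) =
      ∏ j ∈ univ.erase i, sinh (v i - v j + γ) / sinh (v i - v j - γ))
    (hvw : ∀ j, sinh (v i - w j) ≠ 0) (hvwγ : ∀ j, sinh (v i - w j + γ) ≠ 0) :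
    clearedDet γ v w u hm hNM (v i) = 0 := by
  have hsingle : ∀ δ, detCol γ v w u hm hNM (fun l => fCleared δ v l (v i)) =
      (slavnovMatrix γ v w u hm hNM).adjugate (colIdx hm) i * fCleared δ v i (v i) := fun δ => by
    rw [detCol_eq_sum, Finset.sum_eq_single i
      (fun l _ hl => by rw [fCleared_v_eq_zero_of_ne hl, mul_zero]) (by simp)]
  rw [clearedDet, hsingle, hsingle, fCleared, fCleared, sinh_neg]
  simp only [← sub_eq_add_neg]
  linear_combination (slavnovMatrix γ v w u hm hNM).adjugate (colIdx hm) i * sinh γ *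
    (∏ k ∈ univ.erase i, sinh (v k - v i)) * bethe_cleared hb hvw hvwγ

lemma exists_isTrigRep_detCol_fCleared (δ : ℂ) :
    ∃ P, IsTrigRep ((N - 1) + (N - 1)) P
      (fun x => detCol γ v w u hm hNM (fun l => fCleared δ v l x)) := by
  choose P hP using exists_isTrigRep_fCleared δ v
  exact ⟨_, isTrigRep_det_updateCol _ _ hP⟩

lemma exists_isTrigRep_clearedDet_dvd (hvw : ∀ i j, sinh (v i - w j) ≠ 0)
    (hvwγ : ∀ i j, sinh (v i - w j + γ) ≠ 0)
    (hww : ∀ i j : Fin M, i ≠ j → sinh (w i - w j) ≠ 0) :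
    ∃ P, IsTrigRep (M + ((N - 1) + (N - 1))) P (clearedDet γ v w u hm hNM) ∧
      expRootPoly (fun j => wHead w m hNM j - γ) * expRootPoly (wHead w m hNM) ∣ P := by
  obtain ⟨Pγ, hPγ⟩ := exists_isTrigRep_prod (f := fun k x => sinh (x - w k + γ)) univ fun k =>
    (exists_isTrigRep_sinh_sub (w k - γ)).imp fun _ h => h.congr fun x => congrArg sinh (by ring)
  obtain ⟨P₀, hP₀⟩ := exists_isTrigRep_prod univ fun k => exists_isTrigRep_sinh_sub (w k)
  obtain ⟨Fp, hFp⟩ := exists_isTrigRep_detCol_fCleared (γ := γ) (w := w) (u := u) (hm := hm)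
    (hNM := hNM) γ
  obtain ⟨Fm, hFm⟩ := exists_isTrigRep_detCol_fCleared (γ := γ) (w := w) (u := u) (hm := hm)
    (hNM := hNM) (-γ)
  rw [card_univ, Fintype.card_fin] at hPγ hP₀
  refine ⟨Pγ * Fp + P₀ * Fm, (hPγ.mul hFp).add (hP₀.mul hFm), ?_⟩
  have hinj : ∀ i j, i ≠ j → sinh (wHead w m hNM i - wHead w m hNM j) ≠ 0 := fun i j hij =>
    hww _ _ ((Fin.castLE_injective _).ne hij)
  have hinjγ : ∀ i j, i ≠ j → sinh (wHead w m hNM i - γ - (wHead w m hNM j - γ)) ≠ 0 := by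
    simpa only [sub_sub_sub_cancel_right] using hinj
  have hzγ : ∀ j, sinh (wHead w m hNM j - γ - w (Fin.castLE (by omega) j) + γ) = 0 := fun j => by
    rw [wHead, sub_sub_cancel_left, neg_add_cancel, sinh_zero]
  have hz : ∀ j, sinh (wHead w m hNM j - w (Fin.castLE (by omega) j)) = 0 := fun j => by
    rw [wHead, sub_self, sinh_zero]
  have hPz_Pγ := expRootPoly_dvd hinjγ fun j =>
    hPγ.isRoot (Finset.prod_eq_zero (mem_univ _) (hzγ j))
  have hW_P₀ := expRootPoly_dvd hinj fun j => hP₀.isRoot (Finset.prod_eq_zero (mem_univ _) (hz j))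
  have hW_Fp := expRootPoly_dvd hinj fun j => hFp.isRoot <| by
    rw [detCol_fCleared (x := wHead w m hNM j) fun l => hvw l _, detCol_fXXZ_wHead, mul_zero]
  have hPz_Fm := expRootPoly_dvd hinjγ fun j => hFm.isRoot <| by
    have hpole : ∀ l, sinh (v l - (wHead w m hNM j - γ)) ≠ 0 := fun l => by
      rw [sub_sub_eq_add_sub, add_sub_right_comm]; exact hvwγ l _
    rw [detCol_fCleared hpole, detCol_fXXZ_neg_wHead j (fun l => hvw l _) (fun l => hvwγ l _),
      mul_zero]
  refine dvd_add (mul_dvd_mul hPz_Pγ hW_Fp) ?_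
  rw [mul_comm (expRootPoly _)]
  exact mul_dvd_mul hW_P₀ hPz_Fm

lemma exists_isTrigRep_clearedDet_eq_mul (hvw : ∀ i j, sinh (v i - w j) ≠ 0)
    (hvwγ : ∀ i j, sinh (v i - w j + γ) ≠ 0)
    (hvv : ∀ i j, i ≠ j → sinh (v i - v j) ≠ 0)
    (hww : ∀ i j : Fin M, i ≠ j → sinh (w i - w j) ≠ 0)
    (huu : ∀ i j : Fin m, i ≠ j → sinh (u i.castSucc - u j.castSucc) ≠ 0)
    (hvu : ∀ (i : Fin N) (j : Fin m), sinh (v i - u j.castSucc) ≠ 0)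
    (huw : ∀ (i : Fin m) (j : Fin M), sinh (u i.castSucc - w j) ≠ 0)
    (hbethe : ∀ i, ∏ j, sinh (v i - w j + γ) / sinh (v i - w j) =
      ∏ j ∈ univ.erase i, sinh (v i - v j + γ) / sinh (v i - v j - γ))
    (hnd : ∀ i j, sinh (u (Fin.castSucc i) - wHead w m hNM j + γ) ≠ 0) :
    ∃ P q, IsTrigRep (M + ((N - 1) + (N - 1))) P (clearedDet γ v w u hm hNM) ∧
      P = expRootPoly (wHead w m hNM) * expRootPoly v *
        expRootPoly (fun i : Fin m => u i.castSucc) *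
        (expRootPoly (fun j => wHead w m hNM j - γ) * q) := by
  obtain ⟨P, hP, hdvd⟩ :=
    exists_isTrigRep_clearedDet_dvd (u := u) (hm := hm) (hNM := hNM) hvw hvwγ hww
  have hshift : ∀ y j, sinh (y - (wHead w m hNM j - γ)) = sinh (y - wHead w m hNM j + γ) :=
    fun y j => congrArg sinh (by ring)
  have hv := mul_expRootPoly_dvd hdvd hvv
    (fun i => hP.isRoot (clearedDet_v_eq_zero (hbethe i) (hvw i) (hvwγ i)))
    (fun i => by
      rw [eval_mul]
      exact mul_ne_zero (eval_expRootPoly_ne_zero fun j => hshift _ j ▸ hvwγ i _)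
        (eval_expRootPoly_ne_zero fun j => hvw i _))
  obtain ⟨q, hq⟩ := mul_expRootPoly_dvd hv huu
    (fun i => hP.isRoot (by rw [clearedDet_eq (hvu · i), detCol_gXXZ_u, mul_zero]))
    (fun i => by
      simp only [eval_mul]
      refine mul_ne_zero (mul_ne_zero (eval_expRootPoly_ne_zero fun j => hshift _ j ▸ hnd i j)
        (eval_expRootPoly_ne_zero fun j => huw i _)) (eval_expRootPoly_ne_zero fun l => ?_)
      rw [← neg_sub, sinh_neg, neg_ne_zero]
      exact hvu l i)
  exact ⟨P, q, hP, by rw [hq]; ring⟩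

lemma exists_poly_mul_eq_detCol (hvw : ∀ i j, sinh (v i - w j) ≠ 0)
    (hvwγ : ∀ i j, sinh (v i - w j + γ) ≠ 0)
    (hvv : ∀ i j, i ≠ j → sinh (v i - v j) ≠ 0)
    (hww : ∀ i j : Fin M, i ≠ j → sinh (w i - w j) ≠ 0)
    (huu : ∀ i j : Fin m, i ≠ j → sinh (u i.castSucc - u j.castSucc) ≠ 0)
    (hvu : ∀ (i : Fin N) (j : Fin m), sinh (v i - u j.castSucc) ≠ 0)
    (huw : ∀ (i : Fin m) (j : Fin M), sinh (u i.castSucc - w j) ≠ 0)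
    (hbethe : ∀ i, ∏ j, sinh (v i - w j + γ) / sinh (v i - w j) =
      ∏ j ∈ univ.erase i, sinh (v i - v j + γ) / sinh (v i - v j - γ))
    (hnd : ∀ i j, sinh (u (Fin.castSucc i) - wHead w m hNM j + γ) ≠ 0) :
    ∃ Q : ℂ[X], Q.natDegree ≤ M - 1 ∧ (∀ j, Q.IsRoot (exp (2 * (wHead w m hNM j - γ)))) ∧
      ∀ x, (∀ l, sinh (v l - x) ≠ 0) →
        Q.eval (exp (2 * x)) * ((∏ j, sinh (x - wHead w m hNM j)) *
          ∏ i : Fin m, sinh (u i.castSucc - x)) =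
        exp x ^ (M - 1) * detCol γ v w u hm hNM (fun l => gXXZ γ v w l x) := by
  obtain ⟨P, q, hP, hPq⟩ :=
    exists_isTrigRep_clearedDet_eq_mul (hm := hm) hvw hvwγ hvv hww huu hvu huw hbethe hnd
  have hD := ((isTrigRep_expRootPoly (wHead w m hNM)).mul (isTrigRep_expRootPoly' v)).mul
    (isTrigRep_expRootPoly' fun i : Fin m => u i.castSucc)
  simp only [Fintype.card_fin] at hD
  have hDm := ((expRootPoly_monic (wHead w m hNM)).mul (expRootPoly_monic v)).mul
    (expRootPoly_monic fun i : Fin m => u i.castSucc)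
  have hDdeg : (expRootPoly (wHead w m hNM) * expRootPoly v *
      expRootPoly fun i : Fin m => u i.castSucc).natDegree = N - (m + 1) + N + m := by
    rw [((expRootPoly_monic _).mul (expRootPoly_monic _)).natDegree_mul (expRootPoly_monic _),
      (expRootPoly_monic _).natDegree_mul (expRootPoly_monic _), natDegree_expRootPoly,
      natDegree_expRootPoly, natDegree_expRootPoly, Fintype.card_fin, Fintype.card_fin,
      Fintype.card_fin]
  have hP' : IsTrigRep (N - (m + 1) + N + m + (M - 1)) P (clearedDet γ v w u hm hNM) := by
    convert hP using 1; omega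
  obtain ⟨hdeg, heval⟩ := hP'.of_eq_mul hD hDm hDdeg hPq
  refine ⟨C ((∏ j, 2 * exp (wHead w m hNM j)) * (∏ l, -2 * exp (v l)) *
      ∏ i : Fin m, -2 * exp (u i.castSucc)) * (expRootPoly _ * q),
    (natDegree_C_mul_le _ _).trans hdeg,
    fun j => (isRoot_expRootPoly (fun j => wHead w m hNM j - γ) j).dvd
      ((dvd_mul_right _ q).trans (dvd_mul_left _ _)),
    fun x hx => ?_⟩
  have h := heval x
  rw [clearedDet_eq hx] at h
  rw [eval_mul, eval_C]
  refine mul_right_cancel₀ (Finset.prod_ne_zero_iff.mpr fun l (_ : l ∈ univ) => hx l) ?_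
  linear_combination h

lemma SXXZ_update_eq (x : ℂ) :
    SXXZ γ v w (Function.update u (Fin.last m) x) hm hNM =
      (∏ i, ∏ j, sinh (v i - w j)) * detCol γ v w u hm hNM (fun l => gXXZ γ v w l x) /
      (((∏ i : Fin m, ∏ j, sinh (u i.castSucc - wHead w m hNM j)) *
          ∏ j, sinh (x - wHead w m hNM j)) *
        ((∏ i : Fin m, ∏ j ∈ Ioi i, sinh (u i.castSucc - u j.castSucc)) *
          ∏ i : Fin m, sinh (u i.castSucc - x)) *
        (∏ i : Fin N, ∏ j ∈ Ioi i, sinh (v i - v j)) *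
        ∏ i : Fin (N - (m + 1)), ∏ j ∈ Ioi i, sinh (wHead w m hNM j - wHead w m hNM i)) := by
  rw [detCol, ← slavnovMatrix_update, SXXZ, Fin.prod_univ_castSucc,
    Fin.prod_univ_castSucc (fun i => ∏ j ∈ Ioi i, _)]
  simp only [Function.update_self, Function.update_of_ne (Fin.castSucc_lt_last _).ne,
    Fin.prod_Ioi_castSucc, Finset.prod_mul_distrib,
    Finset.Ioi_eq_empty.mpr fun j _ => Fin.le_last j, Finset.prod_empty, mul_one]
  rfl

variable (γ v w u hm hNM) in
lemma exists_SXXZ_update_eq_mul_div : ∃ K : ℂ, ∀ x,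
    SXXZ γ v w (Function.update u (Fin.last m) x) hm hNM =
      K * detCol γ v w u hm hNM (fun l => gXXZ γ v w l x) /
        ((∏ j, sinh (x - wHead w m hNM j)) * ∏ i : Fin m, sinh (u i.castSucc - x)) :=
  ⟨(∏ i, ∏ j, sinh (v i - w j)) /
    ((∏ i : Fin m, ∏ j, sinh (u i.castSucc - wHead w m hNM j)) *
      (∏ i : Fin m, ∏ j ∈ Ioi i, sinh (u i.castSucc - u j.castSucc)) *
      (∏ i : Fin N, ∏ j ∈ Ioi i, sinh (v i - v j)) *
      ∏ i : Fin (N - (m + 1)), ∏ j ∈ Ioi i, sinh (wHead w m hNM j - wHead w m hNM i)),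
    fun x => by rw [SXXZ_update_eq]; ring⟩

lemma exists_poly_eval_eq_SXXZ (hvw : ∀ i j, sinh (v i - w j) ≠ 0)
    (hvwγ : ∀ i j, sinh (v i - w j + γ) ≠ 0)
    (hvv : ∀ i j, i ≠ j → sinh (v i - v j) ≠ 0)
    (hww : ∀ i j : Fin M, i ≠ j → sinh (w i - w j) ≠ 0)
    (huu : ∀ i j : Fin m, i ≠ j → sinh (u i.castSucc - u j.castSucc) ≠ 0)
    (hvu : ∀ (i : Fin N) (j : Fin m), sinh (v i - u j.castSucc) ≠ 0)
    (huw : ∀ (i : Fin m) (j : Fin M), sinh (u i.castSucc - w j) ≠ 0)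
    (hbethe : ∀ i, ∏ j, sinh (v i - w j + γ) / sinh (v i - w j) =
      ∏ j ∈ univ.erase i, sinh (v i - v j + γ) / sinh (v i - v j - γ)) :
    ∃ Q : ℂ[X], Q.natDegree < M ∧ (∀ j, Q.IsRoot (exp (2 * (wHead w m hNM j - γ)))) ∧
      ∀ x, (∀ j, sinh (x - wHead w m hNM j) ≠ 0) → (∀ i : Fin m, sinh (u i.castSucc - x) ≠ 0) →
        (∀ l, sinh (v l - x) ≠ 0) →
        Q.eval (exp (2 * x)) =
          exp x ^ (M - 1) * SXXZ γ v w (Function.update u (Fin.last m) x) hm hNM := by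
  obtain ⟨K, hK⟩ := exists_SXXZ_update_eq_mul_div γ v w u hm hNM
  by_cases hdeg : ∃ i j, sinh (u (Fin.castSucc i) - wHead w m hNM j + γ) = 0
  · obtain ⟨i, j, h⟩ := hdeg
    refine ⟨0, by rw [natDegree_zero]; omega, fun _ => by simp, fun x _ _ _ => ?_⟩
    rw [hK, detCol_eq_zero_of_sinh_eq_zero h (fun l => hvw l _) (fun l => hvwγ l _),
      eval_zero, mul_zero, zero_div, mul_zero]
  push Not at hdeg
  obtain ⟨Q, hQdeg, hroot, heval⟩ :=
    exists_poly_mul_eq_detCol (hm := hm) hvw hvwγ hvv hww huu hvu huw hbethe hdeg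
  refine ⟨C K * Q, ((natDegree_C_mul_le _ _).trans hQdeg).trans_lt (by omega),
    fun j => (hroot j).dvd (dvd_mul_left _ _), fun x hxw hxu hxv => ?_⟩
  have hxW : ∏ j, sinh (x - wHead w m hNM j) ≠ 0 := prod_ne_zero_iff.mpr fun j _ => hxw j
  have hxU : ∏ i : Fin m, sinh (u i.castSucc - x) ≠ 0 := prod_ne_zero_iff.mpr fun i _ => hxu i
  rw [hK, eval_mul, eval_C]
  field_simp
  linear_combination K * heval x hxv

end Slavnov

theorem slavnov_degree_counting_general (γ : ℂ) {m N M : ℕ} (hm : m + 1 ≤ N) (hNM : N ≤ M)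
    (v : Fin N → ℂ) (w : Fin M → ℂ) (u : Fin (m + 1) → ℂ)
    (hvw : ∀ i j, Complex.sinh (v i - w j) ≠ 0)
    (hvwγ : ∀ i j, Complex.sinh (v i - w j + γ) ≠ 0)
    (hvv : ∀ i j, i ≠ j → Complex.sinh (v i - v j) ≠ 0)
    (hww : ∀ i j : Fin M, i ≠ j → Complex.sinh (w i - w j) ≠ 0)
    (huu : ∀ i j : Fin m, i ≠ j → Complex.sinh (u i.castSucc - u j.castSucc) ≠ 0)
    (hvu : ∀ (i : Fin N) (j : Fin m), Complex.sinh (v i - u j.castSucc) ≠ 0)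
    (huw : ∀ (i : Fin m) (j : Fin M), Complex.sinh (u i.castSucc - w j) ≠ 0)
    (hbethe : ∀ i, ∏ j, Complex.sinh (v i - w j + γ) / Complex.sinh (v i - w j) =
      ∏ j ∈ Finset.univ.erase i,
        Complex.sinh (v i - v j + γ) / Complex.sinh (v i - v j - γ)) :
    ∃ c : Fin M → ℂ,
      (∀ x : ℂ,
        (∀ j : Fin M, (j : ℕ) < N - (m + 1) → Complex.sinh (x - w j) ≠ 0) →
        (∀ i : Fin m, Complex.sinh (u i.castSucc - x) ≠ 0) →
        (∀ i : Fin N, Complex.sinh (v i - x) ≠ 0) →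
        SXXZ γ v w (Function.update u (Fin.last m) x) hm hNM =
          ∑ k, c k * Complex.exp (((M : ℂ) - 1 - 2 * ((k : ℕ) : ℂ)) * x)) ∧
      (∀ i : Fin M, (i : ℕ) < N - (m + 1) →
        ∑ k, c k * Complex.exp (((M : ℂ) - 1 - 2 * ((k : ℕ) : ℂ)) * (w i - γ)) = 0) := by
  obtain ⟨Q, hQdeg, hroot, heval⟩ := Slavnov.exists_poly_eval_eq_SXXZ (hm := hm) (hNM := hNM)
    hvw hvwγ hvv hww huu hvu huw hbethe
  refine ⟨fun k => Q.coeff (M - 1 - k), fun x hxw hxu hxv => ?_, fun i hi => ?_⟩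
  · refine mul_left_cancel₀ (pow_ne_zero (M - 1) (exp_ne_zero x)) ?_
    rw [← heval x (fun j => hxw _ j.isLt) hxu hxv, eval_exp_eq_exp_pow_mul_sum hQdeg]
  · have h := eval_exp_eq_exp_pow_mul_sum hQdeg (w i - γ)
    rw [show Q.eval (exp (2 * (w i - γ))) = 0 from hroot ⟨i, hi⟩, eq_comm] at h
    exact (mul_eq_zero.mp h).resolve_left (pow_ne_zero _ (exp_ne_zero _))

/-- Degree counting for the Slavnov determinant: assuming the Bethe equations for
`v_1,…,v_N`, the expression `S_n`, viewed as a function of `u_n`, extends to a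
trigonometric polynomial of degree `M−1` in `u_n` with zeros at `u_n = w_i − γ` for
all `i ≤ Ñ = N − n`. -/
theorem slavnov_degree_counting (γ : ℂ) {m N M : ℕ} (hm : m + 1 ≤ N) (hNM : N ≤ M)
    (v : Fin N → ℂ) (w : Fin M → ℂ) (u : Fin (m + 1) → ℂ)
    (hγ : Complex.sinh γ ≠ 0)
    (hvw : ∀ i j, Complex.sinh (v i - w j) ≠ 0)
    (hvwγ : ∀ i j, Complex.sinh (v i - w j + γ) ≠ 0)
    (hvv : ∀ i j, i ≠ j → Complex.sinh (v i - v j) ≠ 0)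
    (hww : ∀ i j : Fin M, i ≠ j → Complex.sinh (w i - w j) ≠ 0)
    (huu : ∀ i j : Fin m, i ≠ j → Complex.sinh (u i.castSucc - u j.castSucc) ≠ 0)
    (hvu : ∀ (i : Fin N) (j : Fin m), Complex.sinh (v i - u j.castSucc) ≠ 0)
    (huw : ∀ (i : Fin m) (j : Fin M), Complex.sinh (u i.castSucc - w j) ≠ 0)
    (hbethe : ∀ i, ∏ j, Complex.sinh (v i - w j + γ) / Complex.sinh (v i - w j) =
      ∏ j ∈ Finset.univ.erase i,
        Complex.sinh (v i - v j + γ) / Complex.sinh (v i - v j - γ)) :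
    ∃ c : Fin M → ℂ,
      (∀ x : ℂ,
        (∀ j : Fin M, (j : ℕ) < N - (m + 1) → Complex.sinh (x - w j) ≠ 0) →
        (∀ i : Fin m, Complex.sinh (u i.castSucc - x) ≠ 0) →
        (∀ i : Fin N, Complex.sinh (v i - x) ≠ 0) →
        SXXZ γ v w (Function.update u (Fin.last m) x) hm hNM =
          ∑ k, c k * Complex.exp (((M : ℂ) - 1 - 2 * ((k : ℕ) : ℂ)) * x)) ∧
      (∀ i : Fin M, (i : ℕ) < N - (m + 1) →
        ∑ k, c k * Complex.exp (((M : ℂ) - 1 - 2 * ((k : ℕ) : ℂ)) * (w i - γ)) = 0) :=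
  slavnov_degree_counting_general γ hm hNM v w u hvw hvwγ hvv hww huu hvu huw hbethe
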